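/- Let (W,S) be a Coxeter system, let G be a group of automorphisms of W preserving S, and let W' := W^G be the fixed subgroup. Let ≤ denote weak right order on W (u ≤ w iff l(u) + l(u⁻¹w) = l(w)). Then: (a) W' with the induced order is a meet-subsemilattice of (W, ≤) closed under joins that exist in W (i.e., any meet or join in W of a subset of W' lies in W'); (b) for w ∈ W lying below some element of W', the minimum element i⊥(w) of {u ∈ W' | w ≤ u} exists and equals ⋁_{σ ∈ G} σ(w), the join in (W, ≤) of the G-orbit of w. -/

import Mathlib

/-!
Every `σ ∈ G` permutes the simple reflections, so it preserves length and is an automorphism of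
the weak order. If `m` is the join of a `G`-stable set, then `σ m` is an upper bound of it, so
`m ≤ σ m`; doing the same for `σ⁻¹` and transporting by `σ` gives `σ m ≤ m`, so `m` is fixed, and
dually for meets. Subsets of `W^G` and orbits are `G`-stable; in (b) the orbit of `w` is bounded by
a fixed element, hence has a join, which is therefore the least fixed element above `w`.

That bounded sets have joins comes from the existence of meets: a shortest upper bound is below
every upper bound `b`, because its meet with `b` is again an upper bound. The meet of `u` and `v`
is built by induction on `ℓ u + ℓ v`: for a common left descent `s`, `s` times the meet of `s u`
and `s v` is the largest common lower bound with descent `s`, and these agree for different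
descents `i, j` because `u` and `v` have a common lower bound with both descents. Such a bound is
found in the dihedral parabolic subgroup `⟨s_i, s_j⟩`, whose elements with left descent `i` form a
chain, via the parabolic factorisation `u = d x` with `ℓ u = ℓ d + ℓ x`. Everything rests on the
exchange condition, proved with the sign representation of `W` on `W × {±1}`.
-/

/-- Weak right order of a Coxeter system: `u ≤ w` iff `l(u) + l(u⁻¹w) = l(w)`. -/
def weakRO {B W : Type*} [Group W] {M : CoxeterMatrix B} (cs : CoxeterSystem M W)
    (u w : W) : Prop :=
  cs.length u + cs.length (u⁻¹ * w) = cs.length w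

namespace weakRO

variable {B W : Type*} [Group W] {M : CoxeterMatrix B} {cs : CoxeterSystem M W} {u v w : W}

local prefix:100 "s" => cs.simple
local prefix:100 "ℓ" => cs.length
local infix:50 " ≼ " => weakRO cs

theorem of_length_mul (h : ℓ (u * v) = ℓ u + ℓ v) : u ≼ u * v := by
  simp [weakRO, h]

variable (cs) in
theorem refl (w : W) : w ≼ w := by simp [weakRO]

variable (cs) in
theorem one_left (w : W) : 1 ≼ w := by simp [weakRO]

theorem length_le (h : u ≼ w) : ℓ u ≤ ℓ w := by
  unfold weakRO at h; omega

theorem eq_of_length_le (h : u ≼ w) (hlen : ℓ w ≤ ℓ u) : u = w := by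
  unfold weakRO at h
  have : u⁻¹ * w = 1 := cs.length_eq_zero_iff.mp (by omega)
  exact inv_mul_eq_one.mp this

theorem antisymm (h₁ : u ≼ w) (h₂ : w ≼ u) : u = w :=
  h₁.eq_of_length_le h₂.length_le

theorem trans (h₁ : u ≼ v) (h₂ : v ≼ w) : u ≼ w := by
  unfold weakRO at *
  have := cs.length_mul_le (u⁻¹ * v) (v⁻¹ * w)
  have := cs.length_mul_le u (u⁻¹ * w)
  simp only [mul_assoc, mul_inv_cancel_left] at *
  omega

theorem isLeftDescent {i : B} (h : u ≼ w) (hu : cs.IsLeftDescent u i) :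
    cs.IsLeftDescent w i := by
  unfold weakRO CoxeterSystem.IsLeftDescent at *
  have := cs.length_mul_le (s i * u) (u⁻¹ * w)
  simp only [mul_assoc, mul_inv_cancel_left] at this
  omega

theorem simple_mul {i : B} (h : u ≼ w) (hi : cs.IsLeftDescent u i ↔ cs.IsLeftDescent w i) :
    s i * u ≼ s i * w := by
  unfold weakRO at *
  rw [CoxeterSystem.isLeftDescent_iff, CoxeterSystem.isLeftDescent_iff] at hi
  have hu := cs.length_simple_mul u i
  have hw := cs.length_simple_mul w i
  simp only [mul_inv_rev, CoxeterSystem.inv_simple, mul_assoc,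
    CoxeterSystem.simple_mul_simple_cancel_left]
  omega

theorem of_simple_mul {i : B} (h : s i * u ≼ s i * w)
    (hi : cs.IsLeftDescent u i ↔ cs.IsLeftDescent w i) : u ≼ w := by
  simpa using h.simple_mul (i := i) (by
    rw [← not_iff_not, ← CoxeterSystem.isLeftDescent_iff_not_isLeftDescent_mul,
      ← CoxeterSystem.isLeftDescent_iff_not_isLeftDescent_mul, hi])

end weakRO

open List

namespace CoxeterSystem

variable {B W : Type*} [Group W] {M : CoxeterMatrix B} (cs : CoxeterSystem M W)

local prefix:100 "s" => cs.simple
local prefix:100 "π" => cs.wordProd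
local prefix:100 "ℓ" => cs.length
local prefix:100 "lis" => cs.leftInvSeq
local infix:50 " ≼ " => weakRO cs

section Exchange

attribute [local instance] Classical.propDecidable

theorem simple_mul_mul_simple_eq_simple_iff (i : B) (t : W) :
    s i * t * s i = s i ↔ t = s i := by
  constructor
  · intro h
    simpa [mul_assoc] using congrArg (s i * · * s i) h
  · rintro rfl
    simp

noncomputable def signPerm (i : B) : Equiv.Perm (W × ℤˣ) :=
  Function.Involutive.toPerm (fun p => (s i * p.1 * s i, if p.1 = s i then -p.2 else p.2))
    (by
      rintro ⟨t, e⟩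
      dsimp only
      rw [simple_mul_mul_simple_eq_simple_iff]
      by_cases h : t = s i <;> simp [h, mul_assoc])

theorem signPerm_apply (i : B) (t : W) (e : ℤˣ) :
    cs.signPerm i (t, e) = (s i * t * s i, if t = s i then -e else e) := rfl

theorem prod_map_signPerm_apply (ω : List B) (t : W) (e : ℤˣ) :
    (ω.map cs.signPerm).prod (t, e) =
      (π ω * t * (π ω)⁻¹, (-1) ^ (lis ω).count (π ω * t * (π ω)⁻¹) * e) := by
  induction ω with
  | nil => simp
  | cons i ω ih =>
    set t' := π ω * t * (π ω)⁻¹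
    have hconj : π (i :: ω) * t * (π (i :: ω))⁻¹ = MulAut.conj (s i) t' := by
      simp [t', wordProd_cons, mul_assoc]
    have hcount : (lis (i :: ω)).count (MulAut.conj (s i) t') =
        (lis ω).count t' + if t' = s i then 1 else 0 := by
      rw [leftInvSeq, count_cons, count_map_of_injective _ _ (MulAut.conj (s i)).injective]
      simp only [MulAut.conj_apply, inv_simple, beq_iff_eq, eq_comm (a := s i),
        simple_mul_mul_simple_eq_simple_iff]
    rw [map_cons, prod_cons, Equiv.Perm.mul_apply, ih, signPerm_apply, hconj, hcount]
    by_cases h : t' = s i <;> simp [h, pow_succ]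

theorem prod_map_alternatingWord {G : Type*} [Monoid G] (f : B → G) (i i' : B) (m : ℕ) :
    ((alternatingWord i i' (2 * m)).map f).prod = (f i * f i') ^ m := by
  induction m with
  | zero => simp [alternatingWord]
  | succ m ih =>
    rw [show 2 * (m + 1) = 2 * m + 1 + 1 by ring, alternatingWord_succ', alternatingWord_succ']
    simp [ih, pow_succ', mul_assoc]

theorem even_count_leftInvSeq_braid (i i' : B) (t : W) :
    Even ((lis (alternatingWord i i' (2 * M i i'))).count t) := by
  set L := lis (alternatingWord i i' (2 * M i i'))
  have hlen : L.length = 2 * M i i' := by simp [L]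
  have hperiodic : L.drop (M i i') = L.take (M i i') := by
    refine ext_getElem (by simp [hlen]; omega) fun k h₁ h₂ => ?_
    simp only [getElem_drop, getElem_take]
    rw [getElem_leftInvSeq_alternatingWord _ _ _ _ _ (by simp at h₁; omega),
      getElem_leftInvSeq_alternatingWord _ _ _ _ _ (by simp at h₂; omega),
      prod_alternatingWord_eq_mul_pow, prod_alternatingWord_eq_mul_pow]
    rw [show (2 * (M i i' + k) + 1) / 2 = k + M i i' by omega,
      show (2 * k + 1) / 2 = k by omega, pow_add, M.symmetric, cs.simple_mul_simple_pow, mul_one]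
    congr 2
    simp [parity_simps]
  rw [← take_append_drop (M i i') L, count_append, hperiodic]
  exact ⟨_, rfl⟩

theorem isLiftable_signPerm : M.IsLiftable cs.signPerm := by
  intro i i'
  ext ⟨t, e⟩ : 1
  have hbraid : π (alternatingWord i i' (2 * M i i')) = 1 := by
    rw [prod_alternatingWord_eq_mul_pow, if_pos (even_two_mul _), Nat.mul_div_cancel_left _ two_pos,
      one_mul, cs.simple_mul_simple_pow]
  rw [← prod_map_alternatingWord, prod_map_signPerm_apply, hbraid,
    (cs.even_count_leftInvSeq_braid i i' _).neg_one_pow]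
  simp

noncomputable def signRep : W →* Equiv.Perm (W × ℤˣ) :=
  cs.lift ⟨cs.signPerm, cs.isLiftable_signPerm⟩

theorem signRep_wordProd (ω : List B) : cs.signRep (π ω) = (ω.map cs.signPerm).prod := by
  induction ω with
  | nil => simp
  | cons i ω ih =>
    rw [wordProd_cons, map_mul, ih, map_cons, prod_cons, signRep,
      lift_apply_simple cs cs.isLiftable_signPerm]

theorem signRep_simple (i : B) : cs.signRep (s i) = cs.signPerm i :=
  cs.lift_apply_simple cs.isLiftable_signPerm i

theorem simple_mem_leftInvSeq_of_isLeftDescent {ω : List B} {i : B}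
    (h : cs.IsLeftDescent (π ω) i) : s i ∈ lis ω := by
  -- If `s i ∉ lis ω`, computing `signRep (π ω) (t, 1)` along `ω` and along `i :: χ`, with `χ` a
  -- reduced word for `s i * π ω`, forces `s i ∈ lis χ`, i.e. `π ω` shorter than `s i * π ω`.
  by_contra hω
  obtain ⟨χ, hχ, hχω⟩ := cs.exists_isReduced (s i * π ω)
  set t := (π ω)⁻¹ * s i * π ω
  have hsign : ∀ ν : List B, π ν * t * (π ν)⁻¹ = s i →
      cs.signRep (π ν) (t, 1) = (s i, (-1) ^ (lis ν).count (s i)) := fun ν hν => by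
    rw [signRep_wordProd, prod_map_signPerm_apply, hν, mul_one]
  have hωχ : π ω = s i * π χ := by rw [← hχω]; simp
  have key := hsign ω (by simp [t, mul_assoc])
  rw [hωχ, map_mul, Equiv.Perm.mul_apply, hsign χ (by simp [t, hωχ, mul_assoc]), signRep_simple,
    signPerm_apply, count_eq_zero_of_not_mem hω] at key
  have hodd : (lis χ).count (s i) ≠ 0 := fun h0 => by simp [h0] at key
  have hχi := (cs.isLeftInversion_of_mem_leftInvSeq hχ
    (count_pos_iff.mp (Nat.pos_of_ne_zero hodd))).2
  rw [← hχω, ← mul_assoc, simple_mul_simple_self, one_mul] at hχi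
  exact (lt_asymm h) hχi

theorem exists_eraseIdx_of_isLeftDescent {ω : List B} {i : B} (h : cs.IsLeftDescent (π ω) i) :
    ∃ j < ω.length, s i * π ω = π (ω.eraseIdx j) := by
  obtain ⟨j, hj, hget⟩ := mem_iff_getElem.mp (cs.simple_mem_leftInvSeq_of_isLeftDescent h)
  refine ⟨j, by simpa using hj, ?_⟩
  rw [← hget, ← getD_eq_getElem _ 1 hj, getD_leftInvSeq_mul_wordProd]

end Exchange

variable {cs}

theorem IsReduced.of_cons {a : B} {ω : List B} (h : cs.IsReduced (a :: ω)) : cs.IsReduced ω := by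
  simpa using h.drop 1

theorem IsReduced.cons_ne {a b : B} {ω : List B} (h : cs.IsReduced (a :: b :: ω)) : a ≠ b := by
  rintro rfl
  have := cs.length_wordProd_le ω
  have := h.eq
  simp [wordProd_cons] at this
  omega

variable (cs)

theorem exists_isReduced_sublist (ω : List B) :
    ∃ χ, χ <+ ω ∧ cs.IsReduced χ ∧ π χ = π ω := by
  induction ω with
  | nil => exact ⟨[], Sublist.refl _, by simp [IsReduced], rfl⟩
  | cons a ω ih =>
    obtain ⟨χ, hsub, hχ, hπ⟩ := ih
    by_cases ha : cs.IsLeftDescent (π χ) a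
    · obtain ⟨j, hj, herase⟩ := cs.exists_eraseIdx_of_isLeftDescent ha
      refine ⟨χ.eraseIdx j, (χ.eraseIdx_sublist j).trans (hsub.cons a), ?_, ?_⟩
      · have := cs.isLeftDescent_iff.mp ha
        have := length_eraseIdx_add_one hj
        rw [IsReduced, ← herase]
        rw [hχ.eq] at *
        omega
      · rw [← herase, hπ, wordProd_cons]
    · refine ⟨a :: χ, hsub.cons_cons a, ?_, by rw [wordProd_cons, wordProd_cons, hπ]⟩
      rw [IsReduced, wordProd_cons, cs.not_isLeftDescent_iff.mp ha, hχ.eq, length_cons]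

theorem weakRO_wordProd_take {ω : List B} (hω : cs.IsReduced ω) (k : ℕ) :
    π (ω.take k) ≼ π ω := by
  conv_rhs => rw [← take_append_drop k ω, wordProd_append]
  refine weakRO.of_length_mul ?_
  rw [← wordProd_append, take_append_drop, hω.eq, (hω.take k).eq, (hω.drop k).eq,
    ← length_append, take_append_drop]

def parabolicSubgroup (J : Set B) : Subgroup W where
  carrier := {w | ∃ ω : List B, (∀ c ∈ ω, c ∈ J) ∧ π ω = w}
  mul_mem' := by
    rintro _ _ ⟨ω, hω, rfl⟩ ⟨ω', hω', rfl⟩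
    exact ⟨ω ++ ω', by simpa [or_imp, forall_and] using ⟨hω, hω'⟩, wordProd_append ..⟩
  one_mem' := ⟨[], by simp, rfl⟩
  inv_mem' := by
    rintro _ ⟨ω, hω, rfl⟩
    exact ⟨ω.reverse, by simpa using hω, wordProd_reverse ..⟩

theorem simple_mem_parabolicSubgroup {J : Set B} {i : B} (hi : i ∈ J) :
    s i ∈ cs.parabolicSubgroup J :=
  ⟨[i], by simpa using hi, wordProd_singleton ..⟩

theorem exists_isReduced_of_mem_parabolicSubgroup {J : Set B} {w : W}
    (hw : w ∈ cs.parabolicSubgroup J) :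
    ∃ ω, cs.IsReduced ω ∧ (∀ c ∈ ω, c ∈ J) ∧ π ω = w := by
  obtain ⟨ω, hωJ, rfl⟩ := hw
  obtain ⟨χ, hsub, hχ, hπ⟩ := cs.exists_isReduced_sublist ω
  exact ⟨χ, hχ, fun c hc => hωJ c (hsub.subset hc), hπ⟩

variable {cs} in
theorem exists_eraseIdx_of_isLeftDescent_append {k : B} {α β : List B}
    (hα : cs.IsReduced (k :: α)) (h : cs.IsLeftDescent (π (α ++ β)) k) :
    ∃ j < β.length, s k * π (α ++ β) = π α * π (β.eraseIdx j) := by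
  obtain ⟨j, hj, herase⟩ := cs.exists_eraseIdx_of_isLeftDescent h
  by_cases hjα : j < α.length
  · exfalso
    rw [eraseIdx_append_of_lt_length hjα, wordProd_append, wordProd_append, ← mul_assoc,
      mul_left_inj, ← wordProd_cons] at herase
    have hlen := hα.eq
    rw [herase, length_cons] at hlen
    have := cs.length_wordProd_le (α.eraseIdx j)
    have := length_eraseIdx_add_one hjα
    omega
  · rw [not_lt] at hjα
    refine ⟨j - α.length, by simp at hj; omega, ?_⟩
    rw [herase, eraseIdx_append_of_length_le hjα, wordProd_append]

variable {cs} in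
theorem length_mul_of_forall_length_le {J : Set B} {x g : W}
    (hx : ∀ g ∈ cs.parabolicSubgroup J, ℓ x ≤ ℓ (g * x)) (hg : g ∈ cs.parabolicSubgroup J) :
    ℓ (g * x) = ℓ g + ℓ x := by
  obtain ⟨ω, hω, hωJ, rfl⟩ := cs.exists_isReduced_of_mem_parabolicSubgroup hg
  rw [hω.eq]
  clear hg
  induction ω with
  | nil => simp
  | cons k α ih =>
    have hαJ : ∀ c ∈ α, c ∈ J := fun c hc => hωJ c (mem_cons_of_mem k hc)
    specialize ih hω.of_cons hαJ
    obtain ⟨β, hβ, rfl⟩ := cs.exists_isReduced x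
    suffices ¬cs.IsLeftDescent (π α * π β) k by
      rw [wordProd_cons, mul_assoc, cs.not_isLeftDescent_iff.mp this, ih, length_cons]
      ring
    -- exchange would delete a letter of `β`, making `x` longer than an element of `W_J x`
    intro hdesc
    rw [← wordProd_append] at hdesc
    obtain ⟨j, hj, hjβ⟩ := exists_eraseIdx_of_isLeftDescent_append hω hdesc
    have hα : π α ∈ cs.parabolicSubgroup J := ⟨α, hαJ, rfl⟩
    have hmin := hx _ (mul_mem (mul_mem (inv_mem hα)
      (cs.simple_mem_parabolicSubgroup (hωJ k mem_cons_self))) hα)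
    rw [mul_assoc, ← wordProd_append, mul_assoc, hjβ, inv_mul_cancel_left, hβ.eq] at hmin
    have := cs.length_wordProd_le (β.eraseIdx j)
    have := length_eraseIdx_add_one hj
    omega

theorem exists_mem_parabolicSubgroup_weakRO (J : Set B) (u : W) :
    ∃ d ∈ cs.parabolicSubgroup J, d ≼ u ∧
      ∀ k ∈ J, cs.IsLeftDescent u k → cs.IsLeftDescent d k := by
  classical
  have hex : ∃ n, ∃ g ∈ cs.parabolicSubgroup J, ℓ (g * u) = n := ⟨_, 1, one_mem _, rfl⟩
  obtain ⟨g, hg, hgmin⟩ := Nat.find_spec hex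
  have hx : ∀ g' ∈ cs.parabolicSubgroup J, ℓ (g * u) ≤ ℓ (g' * (g * u)) := fun g' hg' =>
    hgmin ▸ Nat.find_min' hex ⟨g' * g, mul_mem hg' hg, by rw [mul_assoc]⟩
  have hu : u = g⁻¹ * (g * u) := by simp
  have hlen := length_mul_of_forall_length_le hx (inv_mem hg)
  refine ⟨g⁻¹, inv_mem hg, hu ▸ weakRO.of_length_mul hlen, fun k hk hku => ?_⟩
  have hklen := length_mul_of_forall_length_le hx
    (mul_mem (cs.simple_mem_parabolicSubgroup hk) (inv_mem hg))
  unfold IsLeftDescent at hku ⊢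
  rw [hu, ← mul_assoc, hklen, hlen] at hku
  omega

def altWord (i j : B) : ℕ → List B
  | 0 => []
  | n + 1 => i :: altWord j i n

@[simp]
theorem length_altWord (i j : B) (n : ℕ) : (altWord i j n).length = n := by
  induction n generalizing i j with
  | zero => rfl
  | succ n ih => simp [altWord, ih]

theorem take_altWord (i j : B) {k n : ℕ} (h : k ≤ n) : (altWord i j n).take k = altWord i j k := by
  induction n generalizing i j k with
  | zero => simp_all [altWord]
  | succ n ih => cases k <;> simp_all [altWord]

variable {cs} in
theorem IsReduced.eq_altWord {i j : B} (hij : i ≠ j) {ω : List B} (hω : cs.IsReduced (i :: ω))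
    (hωij : ∀ c ∈ ω, c = i ∨ c = j) : i :: ω = altWord i j (ω.length + 1) := by
  induction ω generalizing i j with
  | nil => rfl
  | cons b ω ih =>
    obtain rfl : b = j := (hωij b mem_cons_self).resolve_left hω.cons_ne.symm
    exact congrArg (i :: ·)
      (ih hij.symm hω.of_cons fun c hc => (hωij c (mem_cons_of_mem _ hc)).symm)

theorem eq_wordProd_altWord {i j : B} (hij : i ≠ j) {e : W}
    (he : e ∈ cs.parabolicSubgroup {i, j}) (hi : cs.IsLeftDescent e i) :
    e = π (altWord i j (ℓ e)) := by
  obtain ⟨χ, hχ, hχij, hπ⟩ := cs.exists_isReduced_of_mem_parabolicSubgroup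
    (mul_mem (cs.simple_mem_parabolicSubgroup (i := i) (by simp)) he)
  have hlen := cs.isLeftDescent_iff.mp hi
  rw [← hπ, hχ.eq] at hlen
  have hred : cs.IsReduced (i :: χ) := by
    rw [IsReduced, wordProd_cons, hπ, simple_mul_simple_cancel_left, length_cons, hlen]
  rw [← hlen, ← hred.eq_altWord hij hχij, wordProd_cons, hπ, simple_mul_simple_cancel_left]

theorem weakRO_of_mem_parabolicSubgroup_pair {i j : B} (hij : i ≠ j) {d e : W}
    (hd : d ∈ cs.parabolicSubgroup {i, j}) (he : e ∈ cs.parabolicSubgroup {i, j})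
    (hdi : cs.IsLeftDescent d i) (hei : cs.IsLeftDescent e i) (hlen : ℓ e ≤ ℓ d) : e ≼ d := by
  have hd' := cs.eq_wordProd_altWord hij hd hdi
  have he' := cs.eq_wordProd_altWord hij he hei
  have hred : cs.IsReduced (altWord i j (ℓ d)) := by rw [IsReduced, ← hd', length_altWord]
  have := cs.weakRO_wordProd_take hred (ℓ e)
  rwa [take_altWord _ _ hlen, ← hd', ← he'] at this

variable {cs} in
theorem exists_weakRO_isLeftDescent_pair {i j : B} (hij : i ≠ j) {u v : W}
    (hui : cs.IsLeftDescent u i) (huj : cs.IsLeftDescent u j)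
    (hvi : cs.IsLeftDescent v i) (hvj : cs.IsLeftDescent v j) :
    ∃ z, z ≼ u ∧ z ≼ v ∧ cs.IsLeftDescent z i ∧ cs.IsLeftDescent z j := by
  obtain ⟨d, hd, hdu, hdesc⟩ := cs.exists_mem_parabolicSubgroup_weakRO {i, j} u
  obtain ⟨e, he, hev, hedesc⟩ := cs.exists_mem_parabolicSubgroup_weakRO {i, j} v
  have hdi := hdesc i (by simp) hui
  have hei := hedesc i (by simp) hvi
  rcases le_total (ℓ d) (ℓ e) with h | h
  · exact ⟨d, hdu, (cs.weakRO_of_mem_parabolicSubgroup_pair hij he hd hei hdi h).trans hev,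
      hdi, hdesc j (by simp) huj⟩
  · exact ⟨e, (cs.weakRO_of_mem_parabolicSubgroup_pair hij hd he hdi hei h).trans hdu, hev,
      hei, hedesc j (by simp) hvj⟩

variable {cs} in
theorem simple_mul_meet {u v m : W} {k : B} (hu : cs.IsLeftDescent u k)
    (hv : cs.IsLeftDescent v k) (hmu : m ≼ s k * u) (hmv : m ≼ s k * v)
    (hm : ∀ b, b ≼ s k * u → b ≼ s k * v → b ≼ m) :
    s k * m ≼ u ∧ s k * m ≼ v ∧ ∀ b, b ≼ u → b ≼ v → cs.IsLeftDescent b k → b ≼ s k * m := by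
  have hsu := cs.isLeftDescent_iff_not_isLeftDescent_mul.mp hu
  have hsv := cs.isLeftDescent_iff_not_isLeftDescent_mul.mp hv
  have hmk : ¬cs.IsLeftDescent m k := fun h => hsu (hmu.isLeftDescent h)
  have hlift : ∀ {w}, m ≼ s k * w → ¬cs.IsLeftDescent (s k * w) k → s k * m ≼ w :=
    fun h hw => by simpa using h.simple_mul (iff_of_false hmk hw)
  refine ⟨hlift hmu hsu, hlift hmv hsv, fun b hbu hbv hbk => ?_⟩
  have hb := hm (s k * b)
    (hbu.simple_mul (iff_of_true hbk hu)) (hbv.simple_mul (iff_of_true hbk hv))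
  refine weakRO.of_simple_mul (i := k) (by simpa using hb) (iff_of_true hbk ?_)
  exact cs.isLeftDescent_iff_not_isLeftDescent_mul.mpr (by simpa using hmk)

theorem exists_meet (u v : W) : ∃ m, m ≼ u ∧ m ≼ v ∧ ∀ b, b ≼ u → b ≼ v → b ≼ m := by
  generalize hn : ℓ u + ℓ v = n
  induction n using Nat.strong_induction_on generalizing u v with
  | _ n ih =>
  by_cases hcommon : ∃ i, cs.IsLeftDescent u i ∧ cs.IsLeftDescent v i
  swap
  · refine ⟨1, weakRO.one_left cs u, weakRO.one_left cs v, fun b hbu hbv => ?_⟩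
    obtain rfl | hb := eq_or_ne b 1
    · exact weakRO.refl cs 1
    obtain ⟨i, hbi⟩ := cs.exists_leftDescent_of_ne_one hb
    exact absurd ⟨i, hbu.isLeftDescent hbi, hbv.isLeftDescent hbi⟩ hcommon
  have hstep : ∀ k, cs.IsLeftDescent u k → cs.IsLeftDescent v k → ∃ mk, mk ≼ u ∧ mk ≼ v ∧
      ∀ b, b ≼ u → b ≼ v → cs.IsLeftDescent b k → b ≼ mk := fun k huk hvk => by
    obtain ⟨m, hmu, hmv, hm⟩ := ih _ (by
      rw [← hn, ← cs.isLeftDescent_iff.mp huk, ← cs.isLeftDescent_iff.mp hvk]; omega)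
      (s k * u) (s k * v) rfl
    exact ⟨_, simple_mul_meet huk hvk hmu hmv hm⟩
  obtain ⟨i, hui, hvi⟩ := hcommon
  obtain ⟨m, hmu, hmv, hm⟩ := hstep i hui hvi
  refine ⟨m, hmu, hmv, fun b hbu hbv => ?_⟩
  obtain rfl | hb := eq_or_ne b 1
  · exact weakRO.one_left cs m
  obtain ⟨j, hbj⟩ := cs.exists_leftDescent_of_ne_one hb
  obtain rfl | hij := eq_or_ne i j
  · exact hm b hbu hbv hbj
  have huj := hbu.isLeftDescent hbj
  have hvj := hbv.isLeftDescent hbj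
  obtain ⟨mj, hmju, hmjv, hmj⟩ := hstep j huj hvj
  -- `u` and `v` have a common lower bound with descents `i` and `j`, so `mj` has descent `i`
  obtain ⟨z, hzu, hzv, hzi, hzj⟩ := exists_weakRO_isLeftDescent_pair hij hui huj hvi hvj
  exact (hmj b hbu hbv hbj).trans (hm mj hmju hmjv ((hmj z hzu hzv hzj).isLeftDescent hzi))

theorem exists_join_of_bounded {A : Set W} (hA : ∃ w, ∀ a ∈ A, a ≼ w) :
    ∃ m, (∀ a ∈ A, a ≼ m) ∧ ∀ b, (∀ a ∈ A, a ≼ b) → m ≼ b := by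
  classical
  have hex : ∃ n, ∃ w, (∀ a ∈ A, a ≼ w) ∧ ℓ w = n := by
    obtain ⟨w, hw⟩ := hA
    exact ⟨_, w, hw, rfl⟩
  obtain ⟨m, hm, hmlen⟩ := Nat.find_spec hex
  refine ⟨m, hm, fun b hb => ?_⟩
  obtain ⟨c, hcm, hcb, hc⟩ := cs.exists_meet m b
  have hcA : ∀ a ∈ A, a ≼ c := fun a ha => hc a (hm a ha) (hb a ha)
  rwa [hcm.eq_of_length_le (hmlen ▸ Nat.find_min' hex ⟨c, hcA, rfl⟩)] at hcb

theorem length_map_le (σ : W →* W) (hσ : ∀ i, σ (s i) ∈ Set.range cs.simple) (w : W) :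
    ℓ (σ w) ≤ ℓ w := by
  choose f hf using hσ
  obtain ⟨ω, hω, rfl⟩ := cs.exists_isReduced w
  have hσω : σ (π ω) = π (ω.map f) := by
    simp only [wordProd, map_list_prod, map_map]
    congr 1
    exact map_congr_left fun i _ => (hf i).symm
  rw [hσω, hω.eq]
  simpa using cs.length_wordProd_le (ω.map f)

theorem length_map (σ : MulAut W) (hσ : σ '' Set.range cs.simple = Set.range cs.simple)
    (w : W) : ℓ (σ w) = ℓ w := by
  refine le_antisymm (cs.length_map_le σ.toMonoidHom (fun i => by
    rw [← hσ]; exact Set.mem_image_of_mem σ ⟨i, rfl⟩) w) ?_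
  have hσ' : ∀ i, (σ⁻¹ : MulAut W) (s i) ∈ Set.range cs.simple := fun i => by
    obtain ⟨x, hx, hσx⟩ : s i ∈ σ '' Set.range cs.simple := by
      rw [hσ]; exact ⟨i, rfl⟩
    simpa [← hσx] using hx
  simpa using cs.length_map_le (σ⁻¹ : MulAut W).toMonoidHom hσ' (σ w)

variable {cs} in
protected theorem _root_.weakRO.map {u w : W} (σ : MulAut W)
    (hσ : σ '' Set.range cs.simple = Set.range cs.simple) (h : u ≼ w) : σ u ≼ σ w := by
  unfold weakRO at *
  rwa [← map_inv, ← map_mul, cs.length_map σ hσ, cs.length_map σ hσ, cs.length_map σ hσ]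

section FixedPoints

variable {cs} {G : Subgroup (MulAut W)}

theorem map_eq_self_of_forall_weakRO_map
    (hG : ∀ σ ∈ G, σ '' Set.range cs.simple = Set.range cs.simple) {m : W}
    (hm : ∀ σ ∈ G, m ≼ σ m) : ∀ σ ∈ G, σ m = m := fun σ hσ => by
  have h := (hm σ⁻¹ (inv_mem hσ)).map σ (hG σ hσ)
  simp only [MulAut.apply_inv_self] at h
  exact h.antisymm (hm σ hσ)

theorem map_eq_self_of_isJoin
    (hG : ∀ σ ∈ G, σ '' Set.range cs.simple = Set.range cs.simple) {A : Set W}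
    (hA : ∀ σ ∈ G, ∀ a ∈ A, σ a ∈ A) {m : W} (hub : ∀ a ∈ A, a ≼ m)
    (hleast : ∀ b, (∀ a ∈ A, a ≼ b) → m ≼ b) : ∀ σ ∈ G, σ m = m :=
  map_eq_self_of_forall_weakRO_map hG fun σ hσ => hleast _ fun a ha => by
    simpa using (hub _ (hA σ⁻¹ (inv_mem hσ) a ha)).map σ (hG σ hσ)

theorem map_eq_self_of_isMeet
    (hG : ∀ σ ∈ G, σ '' Set.range cs.simple = Set.range cs.simple) {A : Set W}
    (hA : ∀ σ ∈ G, ∀ a ∈ A, σ a ∈ A) {m : W} (hlb : ∀ a ∈ A, m ≼ a)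
    (hgreatest : ∀ b, (∀ a ∈ A, b ≼ a) → b ≼ m) : ∀ σ ∈ G, σ m = m :=
  map_eq_self_of_forall_weakRO_map hG fun σ hσ => by
    have h : σ⁻¹ m ≼ m := hgreatest _ fun a ha => by
      simpa using (hlb _ (hA σ hσ a ha)).map σ⁻¹ (hG σ⁻¹ (inv_mem hσ))
    simpa using h.map σ (hG σ hσ)

end FixedPoints

end CoxeterSystem

/-- Let `(W, S)` be a Coxeter system, `G` a group of automorphisms of `W` preserving
`S`, and `W' = W^G` the fixed subgroup, with `≤` the weak right order on `W`. Then: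
(a) any meet or join in `(W, ≤)` of a subset of `W'` lies in `W'`; (b) for any `w ∈ W`
lying below some element of `W'`, the set `{u ∈ W' | w ≤ u}` has a minimum element,
and this minimum is the join in `(W, ≤)` of the `G`-orbit `{σ w | σ ∈ G}` of `w`. -/
theorem stmt17 {B W : Type*} [Group W] {M : CoxeterMatrix B} (cs : CoxeterSystem M W)
    (G : Subgroup (MulAut W))
    (hG : ∀ σ ∈ G, (σ : MulAut W) '' Set.range cs.simple = Set.range cs.simple) :
    (∀ A : Set W, A ⊆ {w : W | ∀ σ ∈ G, σ w = w} →
      ∀ m : W, ((∀ a ∈ A, weakRO cs m a) ∧ ∀ b : W, (∀ a ∈ A, weakRO cs b a) →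
          weakRO cs b m) →
        m ∈ {w : W | ∀ σ ∈ G, σ w = w}) ∧
    (∀ A : Set W, A ⊆ {w : W | ∀ σ ∈ G, σ w = w} →
      ∀ m : W, ((∀ a ∈ A, weakRO cs a m) ∧ ∀ b : W, (∀ a ∈ A, weakRO cs a b) →
          weakRO cs m b) →
        m ∈ {w : W | ∀ σ ∈ G, σ w = w}) ∧
    (∀ w : W, (∃ u, (∀ σ ∈ G, σ u = u) ∧ weakRO cs w u) →
      ∃ m : W, (∀ σ ∈ G, σ m = m) ∧ weakRO cs w m ∧
        (∀ u : W, (∀ σ ∈ G, σ u = u) → weakRO cs w u → weakRO cs m u) ∧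
        (∀ σ ∈ G, weakRO cs (σ w) m) ∧
        (∀ b : W, (∀ σ ∈ G, weakRO cs (σ w) b) → weakRO cs m b)) := by
  have hstable : ∀ A : Set W, A ⊆ {w : W | ∀ σ ∈ G, σ w = w} → ∀ σ ∈ G, ∀ a ∈ A, σ a ∈ A :=
    fun A hA σ hσ a ha => by rwa [hA ha σ hσ]
  refine ⟨fun A hA m ⟨hlb, hgreatest⟩ =>
      CoxeterSystem.map_eq_self_of_isMeet hG (hstable A hA) hlb hgreatest,
    fun A hA m ⟨hub, hleast⟩ => CoxeterSystem.map_eq_self_of_isJoin hG (hstable A hA) hub hleast,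
    ?_⟩
  rintro w ⟨u, hu, hwu⟩
  set orbit := {x | ∃ σ ∈ G, σ w = x}
  have horbit : ∀ σ ∈ G, ∀ a ∈ orbit, σ a ∈ orbit := by
    rintro σ hσ _ ⟨τ, hτ, rfl⟩
    exact ⟨σ * τ, mul_mem hσ hτ, rfl⟩
  have hbound : ∀ u, (∀ σ ∈ G, σ u = u) → weakRO cs w u → ∀ a ∈ orbit, weakRO cs a u := by
    rintro u hu hwu _ ⟨σ, hσ, rfl⟩
    simpa [hu σ hσ] using hwu.map σ (hG σ hσ)
  obtain ⟨m, hub, hleast⟩ := cs.exists_join_of_bounded ⟨u, hbound u hu hwu⟩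
  refine ⟨m, CoxeterSystem.map_eq_self_of_isJoin hG horbit hub hleast,
    hub w ⟨1, one_mem G, rfl⟩, fun u' hu' hwu' => hleast u' (hbound u' hu' hwu'),
    fun σ hσ => hub _ ⟨σ, hσ, rfl⟩, fun b hb => hleast b ?_⟩
  rintro _ ⟨σ, hσ, rfl⟩
  exact hb σ hσ
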